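/- arXiv:2604.15269 — 2 statements merged into one kernel-verified Lean document; each statement's English description precedes it below -/
import Mathlib

section
/- Let L be an n-dimensional subspace of Z_2^{2n} and L^⊥ = {y : [x,y] = 0 for all x ∈ L} its symplectic dual. Define σ_L = (1/2^n) ∑_{y ∈ L^⊥} |Φ_y⟩⟨Φ_y| on 2n qubits. Then tr((V_x ⊗ V_x) σ_L) = 1 if x ∈ L, and tr((V_x ⊗ V_x) σ_L) = 0 if x ∉ L. -/
set_option maxRecDepth 4000

open Kronecker

/-- The phaseless Weyl operator V_{(a,b)} = ⊗_{i=1}^n Z^{a_i} X^{b_i} on n qubits, acting on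
basis states by Z^a X^b |s⟩ = (-1)^{a·(s⊕b)} |s ⊕ b⟩. -/
noncomputable def WeylV {n : ℕ} (a b : Fin n → ZMod 2) :
    Matrix (Fin n → ZMod 2) (Fin n → ZMod 2) ℂ :=
  Matrix.of fun t s => if t = s + b then (-1 : ℂ) ^ (∑ i, a i * (s i + b i)).val else 0

/-- The symplectic form [x, y] = a·d + b·c mod 2 on Z_2^{2n}, for x = (a,b), y = (c,d). -/
def sympForm {n : ℕ} (x y : (Fin n → ZMod 2) × (Fin n → ZMod 2)) : ZMod 2 :=
  ∑ i, (x.1 i * y.2 i + x.2 i * y.1 i)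

/-- The 2n-qubit Bell state |Φ_y⟩ = (V_y ⊗ I)|Φ_0⟩, with |Φ_0⟩ = 2^{-n/2} ∑_x |x⟩⊗|x⟩. -/
noncomputable def BellPhi {n : ℕ} (y : (Fin n → ZMod 2) × (Fin n → ZMod 2)) :
    (Fin n → ZMod 2) × (Fin n → ZMod 2) → ℂ :=
  (WeylV y.1 y.2 ⊗ₖ (1 : Matrix (Fin n → ZMod 2) (Fin n → ZMod 2) ℂ)).mulVec
    (fun p => if p.1 = p.2 then ((Real.sqrt (2 ^ n))⁻¹ : ℝ) else 0)

open scoped Classical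

noncomputable def chi (u : ZMod 2) : ℂ := (-1) ^ u.val


-- the constant
noncomputable def rr (n : ℕ) : ℂ := (((Real.sqrt (2 ^ n))⁻¹ : ℝ) : ℂ)

lemma bell_apply {n : ℕ} (y : (Fin n → ZMod 2) × (Fin n → ZMod 2))
    (p : (Fin n → ZMod 2) × (Fin n → ZMod 2)) :
    BellPhi y p = (if p.1 = p.2 + y.2 then chi (∑ i, y.1 i * (p.2 i + y.2 i)) else 0) * rr n := by
  obtain ⟨t1, t2⟩ := p
  simp only [BellPhi, Matrix.mulVec, dotProduct, Matrix.kroneckerMap_apply, WeylV,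
    Matrix.of_apply, Matrix.one_apply, chi, rr]
  rw [Fintype.sum_prod_type]
  simp [ite_mul, mul_ite, Finset.sum_ite_eq', Finset.sum_ite_eq]

lemma add_add_cancel' {n : ℕ} (u w : Fin n → ZMod 2) : u + w + w = u := by
  ext i; simp [add_assoc, CharTwo.add_self_eq_zero]

lemma eq_add_comm' {n : ℕ} (u v w : Fin n → ZMod 2) : (u = v + w) ↔ (v = u + w) := by
  constructor <;> rintro rfl <;> rw [add_add_cancel']


lemma WeylV_apply {n : ℕ} (a b t s : Fin n → ZMod 2) :
    WeylV a b t s = if s = t + b then chi (∑ i, a i * t i) else 0 := by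
  rw [WeylV, Matrix.of_apply]
  by_cases h : s = t + b
  · subst h
    rw [if_pos (by rw [add_add_cancel']), if_pos rfl]
    congr 2
    apply Finset.sum_congr rfl
    intro i _
    congr 1
    show t i + b i + b i = t i
    rw [add_assoc, CharTwo.add_self_eq_zero, add_zero]
  · rw [if_neg, if_neg h]
    intro hc
    exact h ((eq_add_comm' t s b).mp hc)

lemma bell_apply' {n : ℕ} (y p : (Fin n → ZMod 2) × (Fin n → ZMod 2)) :
    BellPhi y p = (if p.1 = p.2 + y.2 then chi (∑ i, y.1 i * (p.1 i)) else 0) * rr n := by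
  rw [bell_apply]
  congr 1
  by_cases h : p.1 = p.2 + y.2
  · rw [if_pos h, if_pos h]
    congr 1
    apply Finset.sum_congr rfl
    intro i _
    rw [h]
    rfl
  · rw [if_neg h, if_neg h]


lemma z01 : ∀ u : ZMod 2, u = 0 ∨ u = 1 := by decide

lemma chi_add (u v : ZMod 2) : chi (u + v) = chi u * chi v := by
  have zv2 : ZMod.val (2 : ZMod 2) = 0 := rfl
  have zv1 : ZMod.val (1 : ZMod 2) = 1 := rfl
  have zv11 : ZMod.val ((1 : ZMod 2) + 1) = 0 := rfl
  rcases z01 u with rfl | rfl <;> rcases z01 v with rfl | rfl <;> simp [chi, zv1, zv2, zv11]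


lemma scal_id : ∀ a b c d t : ZMod 2,
    a * (t + d) + a * t + c * (t + b + d) = (a * d + b * c) + c * (t + d) := by decide

lemma mulVec_bell {n : ℕ} (x y : (Fin n → ZMod 2) × (Fin n → ZMod 2))
    (p : (Fin n → ZMod 2) × (Fin n → ZMod 2)) :
    (WeylV x.1 x.2 ⊗ₖ WeylV x.1 x.2).mulVec (BellPhi y) p = chi (sympForm x y) * BellPhi y p := by
  obtain ⟨a, b⟩ := x
  obtain ⟨c, d⟩ := y
  obtain ⟨t1, t2⟩ := p
  simp only [Matrix.mulVec, dotProduct, Matrix.kroneckerMap_apply, bell_apply',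
    WeylV_apply]
  rw [Fintype.sum_prod_type]
  simp only [ite_mul, mul_ite, mul_zero, zero_mul, Finset.sum_ite_eq', Finset.mem_univ, if_true]
  rw [Finset.sum_congr rfl fun x _ =>
    Finset.sum_eq_single_of_mem (t2 + b) (Finset.mem_univ _) (fun x1 _ hne => by simp [hne])]
  simp only [if_pos rfl]
  rw [Finset.sum_eq_single_of_mem (t2 + b + d) (Finset.mem_univ _) (fun x _ hne => by simp [hne]),
    if_pos rfl]
  by_cases h : t1 = t2 + d
  · subst h
    have hcond : t2 + b + d = t2 + d + b := by rw [add_right_comm]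
    simp only [if_pos hcond, if_pos rfl, if_true]
    rw [show chi (sympForm (a, b) (c, d)) * (chi (∑ x : Fin n, c x * (t2 + d) x) * rr n)
        = (chi (sympForm (a, b) (c, d)) * chi (∑ x : Fin n, c x * (t2 + d) x)) * rr n by ring,
      show chi (∑ i : Fin n, a i * (t2 + d) i) * chi (∑ i : Fin n, a i * t2 i) *
        (chi (∑ x : Fin n, c x * (t2 + b + d) x) * rr n)
        = (chi (∑ i : Fin n, a i * (t2 + d) i) * chi (∑ i : Fin n, a i * t2 i) *
          chi (∑ x : Fin n, c x * (t2 + b + d) x)) * rr n by ring]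
    congr 1
    rw [← chi_add, ← chi_add, ← chi_add]
    congr 1
    rw [← Finset.sum_add_distrib, ← Finset.sum_add_distrib]
    show _ = sympForm (a, b) (c, d) + _
    rw [sympForm, ← Finset.sum_add_distrib]
    apply Finset.sum_congr rfl
    intro i _
    simpa using scal_id (a i) (b i) (c i) (d i) (t2 i)
  · have hfalse : ¬ (t2 + b + d = t1 + b) := by
      intro hc
      apply h
      have := congrArg (fun v => v + b) hc
      simp only [add_add_cancel'] at this
      rw [← this, add_right_comm, add_add_cancel']
    rw [if_neg hfalse, if_neg h]
    simp

lemma chi_mul_self (u : ZMod 2) : chi u * chi u = 1 := by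
  have zv1 : ZMod.val (1 : ZMod 2) = 1 := rfl
  rcases z01 u with rfl | rfl <;> simp [chi, zv1]

lemma chi_star (u : ZMod 2) : (starRingEnd ℂ) (chi u) = chi u := by
  simp [chi]

lemma rr_conj {n : ℕ} : (starRingEnd ℂ) (rr n) = rr n := by
  simp [rr]

lemma rr_sq {n : ℕ} : rr n * rr n = ((2 : ℂ) ^ n)⁻¹ := by
  rw [rr, ← Complex.ofReal_mul, ← mul_inv, Real.mul_self_sqrt (by positivity)]
  push_cast
  ring

lemma card_fun {n : ℕ} : Fintype.card (Fin n → ZMod 2) = 2 ^ n := by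
  simp [ZMod.card]

lemma bell_norm {n : ℕ} (y : (Fin n → ZMod 2) × (Fin n → ZMod 2)) :
    ∑ p : (Fin n → ZMod 2) × (Fin n → ZMod 2),
      BellPhi y p * (starRingEnd ℂ) (BellPhi y p) = 1 := by
  simp only [bell_apply']
  rw [Fintype.sum_prod_type_right]
  have : ∀ p2 : Fin n → ZMod 2,
      (∑ p1 : Fin n → ZMod 2,
        ((if p1 = p2 + y.2 then chi (∑ i, y.1 i * p1 i) else 0) * rr n *
          (starRingEnd ℂ) ((if p1 = p2 + y.2 then chi (∑ i, y.1 i * p1 i) else 0) * rr n)))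
      = ((2 : ℂ) ^ n)⁻¹ := by
    intro p2
    rw [Finset.sum_eq_single_of_mem (p2 + y.2) (Finset.mem_univ _) (fun p1 _ hne => by
      simp [hne])]
    rw [if_pos rfl, map_mul, rr_conj, chi_star]
    rw [show chi (∑ i, y.1 i * (p2 + y.2) i) * rr n * (chi (∑ i, y.1 i * (p2 + y.2) i) * rr n)
      = (chi (∑ i, y.1 i * (p2 + y.2) i) * chi (∑ i, y.1 i * (p2 + y.2) i)) * (rr n * rr n)
      by ring, chi_mul_self, rr_sq, one_mul]
  rw [Finset.sum_congr rfl fun p2 _ => this p2, Finset.sum_const, Finset.card_univ, card_fun]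
  simp

lemma trace_single {n : ℕ} (x y : (Fin n → ZMod 2) × (Fin n → ZMod 2)) :
    ((WeylV x.1 x.2 ⊗ₖ WeylV x.1 x.2) *
      Matrix.vecMulVec (BellPhi y) (star (BellPhi y))).trace = chi (sympForm x y) := by
  simp only [Matrix.trace, Matrix.diag_apply, Matrix.mul_apply, Matrix.vecMulVec_apply,
    Pi.star_apply]
  have key : ∀ p : (Fin n → ZMod 2) × (Fin n → ZMod 2),
      (∑ q : (Fin n → ZMod 2) × (Fin n → ZMod 2),
        (WeylV x.1 x.2 ⊗ₖ WeylV x.1 x.2) p q * (BellPhi y q * star (BellPhi y p)))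
      = chi (sympForm x y) * (BellPhi y p * (starRingEnd ℂ) (BellPhi y p)) := by
    intro p
    have : (∑ q : (Fin n → ZMod 2) × (Fin n → ZMod 2),
        (WeylV x.1 x.2 ⊗ₖ WeylV x.1 x.2) p q * (BellPhi y q * star (BellPhi y p)))
        = (∑ q : (Fin n → ZMod 2) × (Fin n → ZMod 2),
          (WeylV x.1 x.2 ⊗ₖ WeylV x.1 x.2) p q * BellPhi y q) * star (BellPhi y p) := by
      rw [Finset.sum_mul]
      apply Finset.sum_congr rfl
      intro q _
      ring
    rw [this]
    have hmv : (∑ q : (Fin n → ZMod 2) × (Fin n → ZMod 2),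
        (WeylV x.1 x.2 ⊗ₖ WeylV x.1 x.2) p q * BellPhi y q)
        = chi (sympForm x y) * BellPhi y p := mulVec_bell x y p
    rw [hmv]
    ring_nf
    rfl
  rw [Finset.sum_congr rfl fun p _ => key p, ← Finset.mul_sum, bell_norm, mul_one]

noncomputable def BB (n : ℕ) :
    LinearMap.BilinForm (ZMod 2) ((Fin n → ZMod 2) × (Fin n → ZMod 2)) :=
  LinearMap.mk₂ (ZMod 2) sympForm
    (fun x x' y => by
      simp only [sympForm, Prod.fst_add, Prod.snd_add, Pi.add_apply, ← Finset.sum_add_distrib]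
      exact Finset.sum_congr rfl fun i _ => by ring)
    (fun c x y => by
      simp only [sympForm, Prod.smul_fst, Prod.smul_snd, Pi.smul_apply, smul_eq_mul,
        Finset.mul_sum]
      exact Finset.sum_congr rfl fun i _ => by ring)
    (fun x y y' => by
      simp only [sympForm, Prod.fst_add, Prod.snd_add, Pi.add_apply, ← Finset.sum_add_distrib]
      exact Finset.sum_congr rfl fun i _ => by ring)
    (fun c x y => by
      simp only [sympForm, Prod.smul_fst, Prod.smul_snd, Pi.smul_apply, smul_eq_mul,
        Finset.mul_sum]
      exact Finset.sum_congr rfl fun i _ => by ring)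

lemma BB_apply {n : ℕ} (x y : (Fin n → ZMod 2) × (Fin n → ZMod 2)) :
    BB n x y = sympForm x y := rfl

lemma sympForm_comm {n : ℕ} (x y : (Fin n → ZMod 2) × (Fin n → ZMod 2)) :
    sympForm x y = sympForm y x :=
  Finset.sum_congr rfl fun i _ => by ring

lemma BB_refl {n : ℕ} : (BB n).IsRefl := fun x y h => by
  rw [BB_apply, sympForm_comm]; exact h

lemma BB_nondeg {n : ℕ} : (BB n).Nondegenerate := by
  refine (LinearMap.IsRefl.nondegenerate_iff_separatingLeft BB_refl).mpr ?_
  intro x hx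
  have h1 : ∀ i, x.1 i = 0 := by
    intro i
    have := hx (0, Pi.single i 1)
    rw [BB_apply] at this
    simpa [sympForm, Pi.single_apply, mul_ite, Finset.sum_ite_eq'] using this
  have h2 : ∀ i, x.2 i = 0 := by
    intro i
    have := hx (Pi.single i 1, 0)
    rw [BB_apply] at this
    simpa [sympForm, Pi.single_apply, mul_ite, Finset.sum_ite_eq'] using this
  exact Prod.ext (funext h1) (funext h2)

lemma finrank_total {n : ℕ} :
    Module.finrank (ZMod 2) ((Fin n → ZMod 2) × (Fin n → ZMod 2)) = 2 * n := by
  rw [Module.finrank_prod, Module.finrank_pi]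
  simp [two_mul]

lemma mem_orth_iff {n : ℕ} (L : Submodule (ZMod 2) ((Fin n → ZMod 2) × (Fin n → ZMod 2)))
    (y : (Fin n → ZMod 2) × (Fin n → ZMod 2)) :
    y ∈ (BB n).orthogonal L ↔ ∀ z ∈ L, sympForm z y = 0 := by
  rw [LinearMap.BilinForm.mem_orthogonal_iff]
  rfl

lemma card_orth {n : ℕ} (L : Submodule (ZMod 2) ((Fin n → ZMod 2) × (Fin n → ZMod 2)))
    (hL : Module.finrank (ZMod 2) L = n) :
    Fintype.card {y : (Fin n → ZMod 2) × (Fin n → ZMod 2) // ∀ z ∈ L, sympForm z y = 0}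
      = 2 ^ n := by
  have e : {y : (Fin n → ZMod 2) × (Fin n → ZMod 2) // ∀ z ∈ L, sympForm z y = 0}
      ≃ ((BB n).orthogonal L) :=
    Equiv.subtypeEquivRight fun y => (mem_orth_iff L y).symm
  rw [Fintype.card_congr e]
  have hrank : Module.finrank (ZMod 2) ((BB n).orthogonal L) = n := by
    rw [LinearMap.BilinForm.finrank_orthogonal BB_nondeg L, finrank_total, hL]
    omega
  rw [Module.card_eq_pow_finrank (K := ZMod 2), hrank, ZMod.card]

lemma exists_dual {n : ℕ} (L : Submodule (ZMod 2) ((Fin n → ZMod 2) × (Fin n → ZMod 2)))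
    {x : (Fin n → ZMod 2) × (Fin n → ZMod 2)} (hx : x ∉ L) :
    ∃ y : (Fin n → ZMod 2) × (Fin n → ZMod 2),
      (∀ z ∈ L, sympForm z y = 0) ∧ sympForm x y ≠ 0 := by
  by_contra h
  push_neg at h
  apply hx
  rw [← LinearMap.BilinForm.orthogonal_orthogonal (BB_nondeg (n := n)) BB_refl L]
  rw [LinearMap.BilinForm.mem_orthogonal_iff]
  intro w hw
  have := h w ((mem_orth_iff L w).mp hw)
  show BB n w x = 0
  rw [BB_apply, sympForm_comm]
  exact this

lemma chi_zero' : chi 0 = 1 := by simp [chi]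

lemma chi_ne_zero' {u : ZMod 2} (h : u ≠ 0) : chi u = -1 := by
  have zv1 : ZMod.val (1 : ZMod 2) = 1 := rfl
  rcases z01 u with rfl | rfl <;> simp_all [chi, zv1]

lemma sympForm_add_right {n : ℕ} (z y y' : (Fin n → ZMod 2) × (Fin n → ZMod 2)) :
    sympForm z (y + y') = sympForm z y + sympForm z y' := by
  simpa [BB_apply] using map_add (BB n z) y y'

lemma prod_add_add_cancel {n : ℕ} (u w : (Fin n → ZMod 2) × (Fin n → ZMod 2)) :
    u + w + w = u := by
  have hw : w + w = 0 := by
    rw [← two_smul (ZMod 2) w, show (2 : ZMod 2) = 0 by decide, zero_smul]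
  rw [add_assoc, hw, add_zero]

theorem stmt_15' {n : ℕ}
    (L : Submodule (ZMod 2) ((Fin n → ZMod 2) × (Fin n → ZMod 2)))
    (hL : Module.finrank (ZMod 2) L = n)
    (x : (Fin n → ZMod 2) × (Fin n → ZMod 2)) :
    (x ∈ L →
      ((WeylV x.1 x.2 ⊗ₖ WeylV x.1 x.2) *
        (((1 : ℂ) / 2 ^ n) •
          ∑ y : {y : (Fin n → ZMod 2) × (Fin n → ZMod 2) // ∀ z ∈ L, sympForm z y = 0},
            Matrix.vecMulVec (BellPhi y.1) (star (BellPhi y.1)))).trace = 1) ∧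
    (x ∉ L →
      ((WeylV x.1 x.2 ⊗ₖ WeylV x.1 x.2) *
        (((1 : ℂ) / 2 ^ n) •
          ∑ y : {y : (Fin n → ZMod 2) × (Fin n → ZMod 2) // ∀ z ∈ L, sympForm z y = 0},
            Matrix.vecMulVec (BellPhi y.1) (star (BellPhi y.1)))).trace = 0) := by
  have htr : ((WeylV x.1 x.2 ⊗ₖ WeylV x.1 x.2) *
        (((1 : ℂ) / 2 ^ n) •
          ∑ y : {y : (Fin n → ZMod 2) × (Fin n → ZMod 2) // ∀ z ∈ L, sympForm z y = 0},
            Matrix.vecMulVec (BellPhi y.1) (star (BellPhi y.1)))).trace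
      = ((1 : ℂ) / 2 ^ n) *
          ∑ y : {y : (Fin n → ZMod 2) × (Fin n → ZMod 2) // ∀ z ∈ L, sympForm z y = 0},
            chi (sympForm x y.1) := by
    rw [Matrix.mul_smul, Matrix.trace_smul, Matrix.mul_sum, Matrix.trace_sum]
    rw [Finset.sum_congr rfl fun y _ => trace_single x y.1]
    simp [smul_eq_mul]
  constructor
  · intro hx
    rw [htr, Finset.sum_congr rfl fun y _ => by rw [y.2 x hx, chi_zero'],
      Finset.sum_const, Finset.card_univ, card_orth L hL]
    simp only [nsmul_eq_mul, mul_one]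
    push_cast
    field_simp
  · intro hx
    obtain ⟨y₀, hy₀L, hy₀x⟩ := exists_dual L hx
    rw [htr]
    set T := ∑ y : {y : (Fin n → ZMod 2) × (Fin n → ZMod 2) // ∀ z ∈ L, sympForm z y = 0},
      chi (sympForm x y.1) with hT
    let e : {y : (Fin n → ZMod 2) × (Fin n → ZMod 2) // ∀ z ∈ L, sympForm z y = 0}
        ≃ {y : (Fin n → ZMod 2) × (Fin n → ZMod 2) // ∀ z ∈ L, sympForm z y = 0} :=
      { toFun := fun y => ⟨y.1 + y₀, fun z hz => by
          rw [sympForm_add_right, y.2 z hz, hy₀L z hz, add_zero]⟩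
        invFun := fun y => ⟨y.1 + y₀, fun z hz => by
          rw [sympForm_add_right, y.2 z hz, hy₀L z hz, add_zero]⟩
        left_inv := fun y => by
          apply Subtype.ext
          exact prod_add_add_cancel y.1 y₀
        right_inv := fun y => by
          apply Subtype.ext
          exact prod_add_add_cancel y.1 y₀ }
    have hTn : T = -T := by
      calc T = ∑ y : {y : (Fin n → ZMod 2) × (Fin n → ZMod 2) // ∀ z ∈ L, sympForm z y = 0},
          chi (sympForm x (e y).1) :=
            (Equiv.sum_comp e fun y => chi (sympForm x y.1)).symm
        _ = ∑ y : {y : (Fin n → ZMod 2) × (Fin n → ZMod 2) // ∀ z ∈ L, sympForm z y = 0},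
            -(chi (sympForm x y.1)) := by
          apply Finset.sum_congr rfl
          intro y _
          have hev : ((e y : {y : (Fin n → ZMod 2) × (Fin n → ZMod 2) // ∀ z ∈ L, sympForm z y = 0}) : (Fin n → ZMod 2) × (Fin n → ZMod 2)) = y.1 + y₀ := rfl
          rw [hev, sympForm_add_right, chi_add, chi_ne_zero' hy₀x]
          ring
        _ = -T := by rw [hT, ← Finset.sum_neg_distrib]
    have hT0 : T = 0 := by
      have h2 : T + T = 0 := by linear_combination hTn
      exact add_self_eq_zero.mp h2
    rw [hT0, mul_zero]

/-- For an n-dimensional subspace L of Z_2^{2n} with symplectic dual L^⊥, and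
σ_L = (1/2^n) ∑_{y ∈ L^⊥} |Φ_y⟩⟨Φ_y|, one has tr((V_x ⊗ V_x) σ_L) = 1 if x ∈ L and
tr((V_x ⊗ V_x) σ_L) = 0 if x ∉ L. -/
theorem stmt_15 {n : ℕ}
    (L : Submodule (ZMod 2) ((Fin n → ZMod 2) × (Fin n → ZMod 2)))
    (hL : Module.finrank (ZMod 2) L = n)
    (x : (Fin n → ZMod 2) × (Fin n → ZMod 2)) :
    (x ∈ L →
      ((WeylV x.1 x.2 ⊗ₖ WeylV x.1 x.2) *
        (((1 : ℂ) / 2 ^ n) •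
          ∑ y : {y : (Fin n → ZMod 2) × (Fin n → ZMod 2) // ∀ z ∈ L, sympForm z y = 0},
            Matrix.vecMulVec (BellPhi y.1) (star (BellPhi y.1)))).trace = 1) ∧
    (x ∉ L →
      ((WeylV x.1 x.2 ⊗ₖ WeylV x.1 x.2) *
        (((1 : ℂ) / 2 ^ n) •
          ∑ y : {y : (Fin n → ZMod 2) × (Fin n → ZMod 2) // ∀ z ∈ L, sympForm z y = 0},
            Matrix.vecMulVec (BellPhi y.1) (star (BellPhi y.1)))).trace = 0) :=
  stmt_15' L hL x
end

section
/- Let G be a finite abelian group with unitary representation μ whose eigenbasis {|λ⟩} has pairwise distinct characters χ_λ. Let σ = ∑_λ a_λ |λ⟩⟨λ| be a density operator diagonal in this basis, and let |σ⟩ = ∑_λ √(a_λ) |λ⟩⊗|λ⟩ and |σ_g⟩ = (I ⊗ μ(g))|σ⟩. Then E_{g ∈ G} |σ_g⟩⟨σ_g|^{⊗t} = ∑_{λ̄, η̄ : η̄ isomorphic to λ̄} √(a_{λ̄} a_{η̄}) (|λ̄⟩⟨η̄|) ⊗ (|λ̄⟩⟨η̄|), where λ̄ = (λ_1,...,λ_t),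 a_{λ̄} = ∏_i a_{λ_i}, and two tuples are isomorphic iff their product characters coincide, equivalently iff one is a permutation of the other. -/
section aux
variable {G : Type*} [CommGroup G] [Fintype G]

lemma aux_star_hom (φ : G →* ℂ) (g : G) : star (φ g) = φ g⁻¹ := by
  have h1 : φ g * φ g⁻¹ = 1 := by rw [← map_mul, mul_inv_cancel, map_one]
  have hpow : (φ g) ^ orderOf g = 1 := by rw [← map_pow, pow_orderOf_eq_one, map_one]
  have hn : ‖φ g‖ = 1 := by
    have h2 : ‖φ g‖ ^ orderOf g = 1 := by
      rw [← norm_pow, hpow, norm_one]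
    have ho : orderOf g ≠ 0 := (orderOf_pos g).ne'
    rcases (pow_eq_one_iff_cases).mp h2 with h | h | h
    · exact absurd h ho
    · exact h
    · nlinarith [norm_nonneg (φ g), h.1]
  have hinv : φ g⁻¹ = (φ g)⁻¹ := eq_inv_of_mul_eq_one_left (by rw [← map_mul, inv_mul_cancel, map_one])
  rw [hinv, Complex.inv_eq_conj hn]
  rfl

lemma aux_sum_hom (φ : G →* ℂ) :
    ∑ g : G, φ g = if φ = 1 then (Fintype.card G : ℂ) else 0 := by
  split_ifs with h
  · subst h; simp
  · obtain ⟨g0, hg0⟩ : ∃ g, φ g ≠ 1 := by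
      by_contra hc; push_neg at hc
      exact h (MonoidHom.ext fun g => by simpa using hc g)
    have key : ∑ g : G, φ (g0 * g) = ∑ g : G, φ g :=
      Fintype.sum_equiv (Equiv.mulLeft g0) _ _ (fun g => rfl)
    simp only [map_mul, ← Finset.mul_sum] at key
    have : (φ g0 - 1) * ∑ g : G, φ g = 0 := by ring_nf; linear_combination key
    rcases mul_eq_zero.mp this with h' | h'
    · exact absurd (sub_eq_zero.mp h') hg0
    · exact h'

lemma aux_ortho2 (φ ψ : G →* ℂ) :
    ∑ g : G, φ g * star (ψ g) = if φ = ψ then (Fintype.card G : ℂ) else 0 := by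
  classical
  have hψ : ∀ g : G, ψ g * ψ g⁻¹ = 1 := fun g => by rw [← map_mul, mul_inv_cancel, map_one]
  let ζ : G →* ℂ :=
    { toFun := fun g => φ g * ψ g⁻¹
      map_one' := by simp
      map_mul' := fun x y => by simp only [map_mul, mul_inv]; ring }
  have hz : ∑ g : G, φ g * star (ψ g) = ∑ g : G, ζ g :=
    Finset.sum_congr rfl fun g _ => by rw [aux_star_hom]; rfl
  rw [hz, aux_sum_hom]
  by_cases hc : φ = ψ
  · subst hc
    rw [if_pos rfl, if_pos (MonoidHom.ext fun g => hψ g)]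
  · rw [if_neg hc, if_neg]
    intro h1
    apply hc
    ext g
    have := congrArg (fun f : G →* ℂ => f g) h1
    have h2 : φ g * ψ g⁻¹ = ψ g * ψ g⁻¹ := by
      rw [hψ g]; exact this
    exact mul_right_cancel₀ (right_ne_zero_of_mul_eq_one (hψ g)) h2

lemma aux_sqrt_prod2 {ι : Type*} (s : Finset ι) (a : ι → ℝ) (ha : ∀ i, 0 ≤ a i) :
    Real.sqrt (∏ i ∈ s, a i) = ∏ i ∈ s, Real.sqrt (a i) := by
  induction s using Finset.cons_induction with
  | empty => simp
  | cons i s hi ih => rw [Finset.prod_cons, Finset.prod_cons, Real.sqrt_mul (ha i), ih]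

end aux



/-- The t-fold tensor power of a vector indexed by Λ × Λ. -/
noncomputable def tensorPow {Λ : Type*} (t : ℕ) (v : Λ × Λ → ℂ) :
    (Fin t → Λ × Λ) → ℂ :=
  fun f => ∏ i, v (f i)

/-- Let G be a finite abelian group acting diagonally with pairwise distinct
characters χ_λ on an orthonormal basis {|λ⟩}, σ = ∑ a_λ |λ⟩⟨λ| a density operator diagonal
in this basis, |σ⟩ = ∑ √a_λ |λ⟩⊗|λ⟩ and |σ_g⟩ = (I ⊗ μ(g))|σ⟩. Then
E_g |σ_g⟩⟨σ_g|^{⊗t} = ∑_{λ̄, η̄ with equal product characters} √(a_λ̄ a_η̄)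
(|λ̄⟩⟨η̄|) ⊗ (|λ̄⟩⟨η̄|) (per copy: diagonal pairs), where a_λ̄ = ∏_i a_{λ_i}. -/
theorem stmt_18 {G : Type*} [CommGroup G] [Fintype G]
    {Λ : Type*} [Fintype Λ] [DecidableEq Λ]
    (χ : Λ → (G →* ℂ)) (hχ : Function.Injective χ)
    (a : Λ → ℝ) (ha : ∀ l, 0 ≤ a l) (hsum : ∑ l, a l = 1) (t : ℕ) :
    ((Fintype.card G : ℂ))⁻¹ •
        ∑ g : G,
          Matrix.vecMulVec
            (tensorPow t (fun p : Λ × Λ =>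
              χ p.2 g * (if p.1 = p.2 then ((Real.sqrt (a p.1) : ℝ) : ℂ) else 0)))
            (star (tensorPow t (fun p : Λ × Λ =>
              χ p.2 g * (if p.1 = p.2 then ((Real.sqrt (a p.1) : ℝ) : ℂ) else 0))))
      = ∑ lb : Fin t → Λ, ∑ eb : Fin t → Λ,
          (if (∏ i, χ (lb i)) = (∏ i, χ (eb i)) then
              ((Real.sqrt (∏ i, a (lb i)) * Real.sqrt (∏ i, a (eb i)) : ℝ) : ℂ)
            else 0) •
          Matrix.of (fun f f' : Fin t → Λ × Λ =>
            if f = (fun i => (lb i, lb i)) ∧ f' = (fun i => (eb i, eb i)) then (1 : ℂ)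
            else 0) := by
  classical
  ext f f'
  simp only [Matrix.smul_apply, Matrix.sum_apply, Matrix.vecMulVec_apply, Pi.star_apply,
    smul_eq_mul, Matrix.of_apply, tensorPow]
  by_cases hf : ∀ i, (f i).1 = (f i).2
  · by_cases hf' : ∀ i, (f' i).1 = (f' i).2
    · obtain ⟨lb₀, rfl⟩ : ∃ lb : Fin t → Λ, f = fun i => (lb i, lb i) :=
        ⟨fun i => (f i).1, funext fun i => Prod.ext rfl (hf i).symm⟩
      obtain ⟨eb₀, rfl⟩ : ∃ eb : Fin t → Λ, f' = fun i => (eb i, eb i) :=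
        ⟨fun i => (f' i).1, funext fun i => Prod.ext rfl (hf' i).symm⟩
      -- RHS collapse
      have hrw : ∀ lb : Fin t → Λ,
          ((fun i => (lb₀ i, lb₀ i)) = fun i => (lb i, lb i)) ↔ lb = lb₀ := by
        intro lb
        constructor
        · intro h; funext i
          exact (congrArg (fun v => (v i).1) h).symm
        · rintro rfl; rfl
      have hrw' : ∀ eb : Fin t → Λ,
          ((fun i => (eb₀ i, eb₀ i)) = fun i => (eb i, eb i)) ↔ eb = eb₀ := by
        intro eb
        constructor
        · intro h; funext i
          exact (congrArg (fun v => (v i).1) h).symm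
        · rintro rfl; rfl
      have hcollapse : (∑ lb : Fin t → Λ, ∑ eb : Fin t → Λ,
          (if (∏ i, χ (lb i)) = (∏ i, χ (eb i)) then
              ((Real.sqrt (∏ i, a (lb i)) * Real.sqrt (∏ i, a (eb i)) : ℝ) : ℂ)
            else 0) *
          (if ((fun i => (lb₀ i, lb₀ i)) = fun i => (lb i, lb i)) ∧
              ((fun i => (eb₀ i, eb₀ i)) = fun i => (eb i, eb i)) then (1:ℂ) else 0)) =
          (if (∏ i, χ (lb₀ i)) = (∏ i, χ (eb₀ i)) then
              ((Real.sqrt (∏ i, a (lb₀ i)) * Real.sqrt (∏ i, a (eb₀ i)) : ℝ) : ℂ)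
            else 0) := by
        simp only [hrw, hrw', ite_and, mul_ite, mul_one, mul_zero, Finset.sum_ite_eq',
          Finset.mem_univ, if_true]
        simp
      rw [hcollapse]
      -- main computation
      have hterm : ∀ g : G,
          (∏ i, (χ ((fun i => (lb₀ i, lb₀ i)) i).2 g *
              (if ((fun i => (lb₀ i, lb₀ i)) i).1 = ((fun i => (lb₀ i, lb₀ i)) i).2
                then ((Real.sqrt (a ((fun i => (lb₀ i, lb₀ i)) i).1) : ℝ) : ℂ) else 0))) *
          star (∏ i, (χ ((fun i => (eb₀ i, eb₀ i)) i).2 g *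
              (if ((fun i => (eb₀ i, eb₀ i)) i).1 = ((fun i => (eb₀ i, eb₀ i)) i).2
                then ((Real.sqrt (a ((fun i => (eb₀ i, eb₀ i)) i).1) : ℝ) : ℂ) else 0)))
          = (((Real.sqrt (∏ i, a (lb₀ i)) * Real.sqrt (∏ i, a (eb₀ i)) : ℝ)) : ℂ) *
            ((∏ i, χ (lb₀ i)) g * star ((∏ i, χ (eb₀ i)) g)) := by
        intro g
        simp only [eq_self_iff_true, if_true]
        rw [Finset.prod_mul_distrib, Finset.prod_mul_distrib, star_mul', star_prod]
        simp only [Complex.star_def, Complex.conj_ofReal]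
        rw [aux_sqrt_prod2 _ _ (fun i => ha _), aux_sqrt_prod2 _ _ (fun i => ha _)]
        push_cast
        rw [MonoidHom.finset_prod_apply, MonoidHom.finset_prod_apply]
        simp only [map_prod, Complex.conj_ofReal]
        ring
      rw [Finset.sum_congr rfl fun g _ => hterm g, ← Finset.mul_sum, aux_ortho2]
      have hcard : (Fintype.card G : ℂ) ≠ 0 := by
        exact_mod_cast Fintype.card_ne_zero
      split_ifs with h
      · field_simp
        try ring
      · simp
    · push_neg at hf'
      obtain ⟨i₀, hi₀⟩ := hf'
      have hL : ∀ g : G, star (∏ i, (χ (f' i).2 g *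
          (if (f' i).1 = (f' i).2 then ((Real.sqrt (a (f' i).1) : ℝ) : ℂ) else 0))) = 0 := by
        intro g
        rw [Finset.prod_eq_zero (Finset.mem_univ i₀) (by simp [hi₀]), star_zero]
      simp only [hL, mul_zero, Finset.sum_const_zero, mul_zero]
      symm
      refine Finset.sum_eq_zero fun lb _ => Finset.sum_eq_zero fun eb _ => ?_
      have hneg : ¬((f = fun i => (lb i, lb i)) ∧ f' = fun i => (eb i, eb i)) := by
        rintro ⟨-, h2⟩
        exact hi₀ (by rw [congrFun h2 i₀])
      rw [if_neg hneg, mul_zero]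
  · push_neg at hf
    obtain ⟨i₀, hi₀⟩ := hf
    have hL : ∀ g : G, (∏ i, (χ (f i).2 g *
        (if (f i).1 = (f i).2 then ((Real.sqrt (a (f i).1) : ℝ) : ℂ) else 0))) = 0 := by
      intro g
      exact Finset.prod_eq_zero (Finset.mem_univ i₀) (by simp [hi₀])
    simp only [hL, zero_mul, Finset.sum_const_zero, mul_zero]
    symm
    refine Finset.sum_eq_zero fun lb _ => Finset.sum_eq_zero fun eb _ => ?_
    have hneg : ¬((f = fun i => (lb i, lb i)) ∧ f' = fun i => (eb i, eb i)) := by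
      rintro ⟨h1, -⟩
      exact hi₀ (by rw [congrFun h1 i₀])
    rw [if_neg hneg, mul_zero]
end
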